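/- Let μ be the limiting measure of the recursive construction. If x ∈ supp μ lies outside I_s = ((1-3^s)/2 - 1/3, (3^s-1)/2 + 1/3), then the point mass μ({x}) is at most 1/(2s). Consequently μ({λ}) → 0 as |λ| → ∞ along λ ∈ supp μ. -/

import Mathlib

/-!
The three pieces `μ_t`, `S_{∓3^t} T_{t+1} μ_t` of `μ_{t+1}` are carried by balls separated by
gaps longer than `1/3`, so by induction every interval of length `1/3` has `μ_t`-mass at most `1`.
The mass that `S_c T_{t+1} μ_t` puts on a point is `1/(2(t+1))` times the `μ_t`-mass of `2(t+1)`
distinct points inside a window of width `2 r_{t+1} < 1/3`, hence at most `1/(2(t+1))`. A point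
outside the support of `μ_s` therefore only ever receives mass `≤ 1/(2(s+1))`, and `μ` agrees
with `μ_t` at `x` as soon as `x ∈ I_t`.
-/

open MeasureTheory
open scoped ENNReal

/-- `r k = 2^{-(k+1)^2}`. -/
noncomputable def r (k : ℕ) : ℝ := (2 : ℝ) ^ (-(((k : ℤ) + 1) ^ 2))

/-- `S t` is the shift of a measure by `t`. -/
noncomputable def S (t : ℝ) (ρ : Measure ℝ) : Measure ℝ := ρ.map (· + t)

/-- `T k` averages the `2k` shifts by `± r_k j / k`, `j = 1, …, k`. -/
noncomputable def T (k : ℕ) (ρ : Measure ℝ) : Measure ℝ :=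
  ((2 * k : ℝ≥0∞))⁻¹ •
    ∑ j ∈ Finset.Icc 1 k, (S (-(r k * j / k)) ρ + S (r k * j / k) ρ)

/-- `μ_0 = δ_0`, `μ_k = μ_{k-1} + (S_{-3^{k-1}} + S_{3^{k-1}}) T_k μ_{k-1}`. -/
noncomputable def μseq : ℕ → Measure ℝ
  | 0 => Measure.dirac 0
  | k + 1 => μseq k +
      (S (-(3 ^ k : ℝ)) (T (k + 1) (μseq k)) + S ((3 ^ k : ℝ)) (T (k + 1) (μseq k)))

/-- The interval `I_s = ((1-3^s)/2 - 1/3, (3^s-1)/2 + 1/3)`. -/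
noncomputable def I (s : ℕ) : Set ℝ :=
  Set.Ioo ((1 - 3 ^ s) / 2 - 1 / 3) ((3 ^ s - 1) / 2 + 1 / 3)

open Filter
open Metric Set

lemma r_pos (k : ℕ) : 0 < r k := by
  unfold r; positivity

lemma r_le_pow (k : ℕ) : r k ≤ (1 / 16 : ℝ) ^ k := by
  calc r k ≤ (2 : ℝ) ^ (4 * -(k : ℤ)) :=
        zpow_le_zpow_right₀ one_le_two (by nlinarith [sq_nonneg ((k : ℤ) - 1)])
    _ = (1 / 16 : ℝ) ^ k := by rw [zpow_mul, zpow_neg, zpow_natCast, one_div, inv_pow]; norm_num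

lemma r_succ_le (t : ℕ) : r (t + 1) ≤ 1 / 16 :=
  (r_le_pow _).trans (pow_le_of_le_one (by norm_num) (by norm_num) t.succ_ne_zero)

/-- `μseq t` is carried by `closedBall 0 (radius t)`; the term `(1 - 16⁻ᵗ) / 15` absorbs the
smearing radii `r k ≤ 16⁻ᵏ`. -/
noncomputable def radius (t : ℕ) : ℝ := (3 ^ t - 1) / 2 + (1 - (1 / 16) ^ t) / 15

lemma radius_succ (t : ℕ) : radius (t + 1) = 3 ^ t + radius t + (1 / 16) ^ (t + 1) := by
  unfold radius; ring

lemma radius_lt (t : ℕ) : radius t < (3 ^ t - 1) / 2 + 1 / 15 := by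
  unfold radius; linarith [pow_pos (by norm_num : (0 : ℝ) < 1 / 16) t]

lemma radius_nonneg (t : ℕ) : 0 ≤ radius t := by
  unfold radius
  linarith [one_le_pow₀ (by norm_num : (1 : ℝ) ≤ 3) (n := t),
    pow_le_one₀ (by norm_num : (0 : ℝ) ≤ 1 / 16) (by norm_num) (n := t)]

lemma radius_mono (t : ℕ) : radius t ≤ radius (t + 1) := by
  rw [radius_succ]; linarith [pow_pos (by norm_num : (0 : ℝ) < 3) t,
    pow_pos (by norm_num : (0 : ℝ) < 1 / 16) (t + 1)]

lemma radius_gap (t : ℕ) : 2 * radius t + r (t + 1) + 1 / 3 < 3 ^ t := by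
  linarith [radius_lt t, r_succ_le t]

lemma lt_abs_of_notMem_I {s : ℕ} {x : ℝ} (hx : x ∉ I s) : radius s < |x| := by
  by_contra! h
  have := radius_lt s
  exact hx ⟨by linarith [neg_abs_le x], by linarith [le_abs_self x]⟩

lemma eventually_mem_I (x : ℝ) : ∀ᶠ t in atTop, x ∈ I t := by
  have h3 := tendsto_pow_atTop_atTop_of_one_lt (by norm_num : (1 : ℝ) < 3)
  filter_upwards [h3.eventually_gt_atTop (2 * |x| + 1)] with t ht
  exact ⟨by linarith [neg_abs_le x], by linarith [le_abs_self x]⟩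

lemma S_apply (c : ℝ) (ν : Measure ℝ) {A : Set ℝ} (hA : MeasurableSet A) :
    S c ν A = ν ((· + c) ⁻¹' A) :=
  Measure.map_apply (measurable_add_const c) hA

lemma T_apply (k : ℕ) (ρ : Measure ℝ) {A : Set ℝ} (hA : MeasurableSet A) :
    T k ρ A = (2 * (k : ℝ≥0∞))⁻¹ * ∑ j ∈ Finset.Icc 1 k,
      (ρ ((· + -(r k * j / k)) ⁻¹' A) + ρ ((· + r k * j / k) ⁻¹' A)) := by
  simp only [T, Measure.smul_apply, Measure.finsetSum_apply, Measure.add_apply,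
    S_apply _ _ hA, smul_eq_mul]

lemma shift_mem_Ioc {k j : ℕ} (hj : j ∈ Finset.Icc 1 k) : r k * j / k ∈ Ioc 0 (r k) := by
  obtain ⟨h1, hjk⟩ := Finset.mem_Icc.mp hj
  have hk : (0 : ℝ) < k := by exact_mod_cast h1.trans hjk
  have hj0 : (0 : ℝ) < j := by exact_mod_cast h1
  have hjk' : (j : ℝ) ≤ k := by exact_mod_cast hjk
  exact ⟨by have := r_pos k; positivity,
    (div_le_iff₀ hk).mpr (mul_le_mul_of_nonneg_left hjk' (r_pos k).le)⟩

lemma T_apply_le (k : ℕ) (ρ : Measure ℝ) {A : Set ℝ} (hA : MeasurableSet A) {C : ℝ≥0∞}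
    (h : ∀ d, |d| ≤ r k → ρ ((· + d) ⁻¹' A) ≤ C) : T k ρ A ≤ C := by
  rcases k.eq_zero_or_pos with rfl | hk
  · simp [T]
  have hshift : ∀ j ∈ Finset.Icc 1 k, |r k * j / k| ≤ r k := fun j hj => by
    obtain ⟨hpos, hle⟩ := shift_mem_Ioc hj
    rwa [abs_of_pos hpos]
  calc T k ρ A ≤ (2 * (k : ℝ≥0∞))⁻¹ * ∑ _j ∈ Finset.Icc 1 k, (C + C) := by
        rw [T_apply k ρ hA]
        gcongr with j hj
        · exact h _ (by rw [abs_neg]; exact hshift j hj)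
        · exact h _ (hshift j hj)
    _ = C := by
        rw [Finset.sum_const, Nat.card_Icc, Nat.add_sub_cancel, nsmul_eq_mul, ← two_mul,
          ← mul_assoc (k : ℝ≥0∞), mul_comm (k : ℝ≥0∞) 2]
        exact ENNReal.inv_mul_cancel_left (by simp; omega) (by finiteness)

lemma sum_measure_singleton_add_le {ι : Type*} (ρ : Measure ℝ) {s : Finset ι} {f : ι → ℝ}
    (hf : InjOn f s) {y R : ℝ} (hfR : ∀ i ∈ s, f i ∈ Ioc 0 R) :
    ∑ i ∈ s, (ρ {y + f i} + ρ {y - f i}) ≤ ρ (Icc (y - R) (y + R)) := by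
  classical
  set P := s.image (y + f ·)
  set M := s.image (y - f ·)
  have hdisj : Disjoint P M := by
    simp only [P, M, Finset.disjoint_left, Finset.mem_image]
    rintro _ ⟨i, hi, rfl⟩ ⟨j, hj, hij⟩
    linarith [(hfR i hi).1, (hfR j hj).1]
  have hPM : ↑(P ∪ M) ⊆ Icc (y - R) (y + R) := by
    intro p hp
    simp only [P, M, Finset.coe_union, Finset.coe_image, mem_union, mem_image] at hp
    rcases hp with ⟨i, hi, rfl⟩ | ⟨i, hi, rfl⟩ <;> have := hfR i hi <;>
      constructor <;> linarith [this.1, this.2]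
  calc ∑ i ∈ s, (ρ {y + f i} + ρ {y - f i})
      = ∑ p ∈ P ∪ M, ρ {p} := by
        have hP : InjOn (fun i => y + f i) s := (add_right_injective y).comp_injOn hf
        have hM : InjOn (fun i => y - f i) s := sub_right_injective.comp_injOn hf
        rw [Finset.sum_union hdisj, Finset.sum_image hP, Finset.sum_image hM,
          Finset.sum_add_distrib]
    _ = ρ ↑(P ∪ M) := sum_measure_singleton
    _ ≤ ρ (Icc (y - R) (y + R)) := measure_mono hPM

lemma T_apply_singleton_le (k : ℕ) (ρ : Measure ℝ) (y : ℝ) :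
    T k ρ {y} ≤ (2 * (k : ℝ≥0∞))⁻¹ * ρ (Icc (y - r k) (y + r k)) := by
  rw [T_apply k ρ (measurableSet_singleton y)]
  simp only [preimage_add_right_singleton, neg_neg]
  simp only [← sub_eq_add_neg]
  gcongr
  refine sum_measure_singleton_add_le ρ (fun i hi j hj hij => ?_) fun j hj => shift_mem_Ioc hj
  have hk : (k : ℝ) ≠ 0 := Nat.cast_ne_zero.mpr (by have := Finset.mem_Icc.mp hi; omega)
  have := mul_right_cancel₀ hk ((div_eq_div_iff hk hk).mp hij)
  exact_mod_cast mul_left_cancel₀ (r_pos k).ne' this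

lemma T_compl_closedBall {ρ : Measure ℝ} {x m : ℝ} (h : ρ (closedBall x m)ᶜ = 0) (k : ℕ) :
    T k ρ (closedBall x (m + r k))ᶜ = 0 := by
  refine le_zero_iff.mp (T_apply_le k ρ measurableSet_closedBall.compl fun d hd => ?_)
  refine (measure_mono_null ?_ h).le
  rw [preimage_compl, preimage_add_right_closedBall, compl_subset_compl]
  refine closedBall_subset_closedBall' ?_
  rw [Real.dist_eq, sub_sub_cancel]
  linarith

lemma S_compl_closedBall {ν : Measure ℝ} {x m : ℝ} (h : ν (closedBall x m)ᶜ = 0) (c : ℝ) :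
    S c ν (closedBall (x + c) m)ᶜ = 0 := by
  rwa [S_apply c ν measurableSet_closedBall.compl, preimage_compl, preimage_add_right_closedBall,
    add_sub_cancel_right]

lemma S_T_Icc_le {ρ : Measure ℝ} {L : ℝ} (h : ∀ a, ρ (Icc a (a + L)) ≤ 1) (c : ℝ) (k : ℕ)
    (a : ℝ) : S c (T k ρ) (Icc a (a + L)) ≤ 1 := by
  rw [S_apply c _ measurableSet_Icc, preimage_add_const_Icc]
  refine T_apply_le k ρ measurableSet_Icc fun d _ => ?_
  rw [preimage_add_const_Icc, show a + L - c - d = a - c - d + L by ring]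
  exact h _

lemma S_T_singleton_le {ρ : Measure ℝ} {L : ℝ} (h : ∀ a, ρ (Icc a (a + L)) ≤ 1) {k : ℕ}
    (hk : 2 * r k ≤ L) (c x : ℝ) : S c (T k ρ) {x} ≤ (2 * (k : ℝ≥0∞))⁻¹ := by
  rw [S_apply c _ (measurableSet_singleton x), preimage_add_right_singleton, ← sub_eq_add_neg]
  calc T k ρ {x - c} ≤ (2 * (k : ℝ≥0∞))⁻¹ * ρ (Icc (x - c - r k) (x - c + r k)) :=
        T_apply_singleton_le k ρ _
    _ ≤ (2 * (k : ℝ≥0∞))⁻¹ * 1 := by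
        gcongr
        exact (measure_mono (Icc_subset_Icc_right (by linarith))).trans (h _)
    _ = (2 * (k : ℝ≥0∞))⁻¹ := mul_one _

lemma μseq_compl_closedBall (t : ℕ) : μseq t (closedBall 0 (radius t))ᶜ = 0 := by
  induction t with
  | zero => simp [μseq, radius]
  | succ t ih =>
    have hpiece : ∀ c : ℝ, |c| = 3 ^ t →
        S c (T (t + 1) (μseq t)) (closedBall 0 (radius (t + 1)))ᶜ = 0 := fun c hc => by
      refine measure_mono_null (compl_subset_compl.mpr (closedBall_subset_closedBall' ?_))
        (zero_add c ▸ S_compl_closedBall (T_compl_closedBall ih (t + 1)) c)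
      rw [Real.dist_eq, sub_zero, hc, radius_succ]
      linarith [r_le_pow (t + 1)]
    rw [μseq, Measure.add_apply, Measure.add_apply,
      measure_mono_null (compl_subset_compl.mpr (closedBall_subset_closedBall (radius_mono t))) ih,
      hpiece _ (by rw [abs_neg, abs_of_pos (by positivity)]), hpiece _ (abs_of_pos (by positivity))]
    simp

/-- The three pieces of `μseq (t + 1)` sit on balls separated by gaps longer than `1 / 3`,
so a set of diameter at most `1 / 3` sees only one of them. -/
lemma μseq_succ_apply_of_subset_Icc {t : ℕ} {A : Set ℝ} {a : ℝ}
    (hAa : A ⊆ Icc a (a + 1 / 3)) :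
    μseq (t + 1) A = μseq t A ∨ ∃ c, μseq (t + 1) A = S c (T (t + 1) (μseq t)) A := by
  have hnull : ∀ {ν : Measure ℝ} {c m : ℝ}, ν (closedBall c m)ᶜ = 0 →
      (∀ y ∈ A, y < c - m ∨ c + m < y) → ν A = 0 := fun hν hout => by
    refine measure_mono_null (fun y hy => ?_) hν
    intro hyB
    rw [mem_closedBall, Real.dist_eq, abs_le] at hyB
    rcases hout y hy with h | h <;> linarith
  have h₀ := μseq_compl_closedBall t
  have hT := T_compl_closedBall h₀ (t + 1)
  have hL := S_compl_closedBall hT (-3 ^ t)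
  have hR := S_compl_closedBall hT (3 ^ t)
  rw [zero_add] at hL hR
  have hrad := radius_nonneg t
  have hgap := radius_gap t
  have hr := r_pos (t + 1)
  rw [μseq, Measure.add_apply, Measure.add_apply]
  by_cases ha : radius t < a
  · refine Or.inr ⟨3 ^ t, ?_⟩
    rw [hnull h₀ fun y hy => .inr (by linarith [(hAa hy).1]),
      hnull hL fun y hy => .inr (by linarith [(hAa hy).1]), zero_add, zero_add]
  by_cases hb : a + 1 / 3 < -radius t
  · refine Or.inr ⟨-3 ^ t, ?_⟩
    rw [hnull h₀ fun y hy => .inl (by linarith [(hAa hy).2]),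
      hnull hR fun y hy => .inl (by linarith [(hAa hy).2]), zero_add, add_zero]
  · refine Or.inl ?_
    rw [hnull hL fun y hy => .inr (by linarith [(hAa hy).1]),
      hnull hR fun y hy => .inl (by linarith [(hAa hy).2]), add_zero, add_zero]

lemma μseq_Icc_le_one (t : ℕ) (a : ℝ) : μseq t (Icc a (a + 1 / 3)) ≤ 1 := by
  induction t generalizing a with
  | zero => rw [μseq]; exact prob_le_one
  | succ t ih =>
    rcases μseq_succ_apply_of_subset_Icc subset_rfl with h | ⟨c, h⟩ <;> rw [h]
    exacts [ih a, S_T_Icc_le ih c (t + 1) a]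

lemma μseq_singleton_le {s t : ℕ} (hst : s ≤ t) {x : ℝ} (hx : radius s < |x|) :
    μseq t {x} ≤ (2 * ((s + 1 : ℕ) : ℝ≥0∞))⁻¹ := by
  induction t, hst using Nat.le_induction with
  | base =>
    refine (measure_mono_null (fun y hy hyB => ?_) (μseq_compl_closedBall s)).trans_le zero_le
    rw [mem_singleton_iff.mp hy, mem_closedBall, dist_zero_right, Real.norm_eq_abs] at hyB
    linarith
  | succ t hst ih =>
    have hxI : {x} ⊆ Icc x (x + 1 / 3) := singleton_subset_iff.mpr ⟨le_rfl, by linarith⟩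
    rcases μseq_succ_apply_of_subset_Icc hxI with h | ⟨c, h⟩ <;>
      rw [h]
    · exact ih
    · refine (S_T_singleton_le (μseq_Icc_le_one t) ?_ c x).trans ?_
      · linarith [r_succ_le t]
      · gcongr

/-- If `μ` is the limit measure, then every point mass of `μ` outside `I_s` is at most
`1/(2s)`; consequently the point masses tend to `0` at infinity. -/
theorem mu_limit_point_masses_small (μ : Measure ℝ)
    (hμ : ∀ s : ℕ, μ.restrict (I s) = μseq s) :
    (∀ s : ℕ, 1 ≤ s → ∀ x : ℝ, x ∉ I s → μ {x} ≤ (1 : ℝ≥0∞) / (2 * s)) ∧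
    Tendsto (fun x : ℝ => μ {x}) (cocompact ℝ) (nhds 0) := by
  have hsmall : ∀ s : ℕ, 1 ≤ s → ∀ x : ℝ, x ∉ I s → μ {x} ≤ (1 : ℝ≥0∞) / (2 * s) := by
    intro s hs x hx
    obtain ⟨t, hst, hxt⟩ := ((eventually_ge_atTop s).and (eventually_mem_I x)).exists
    calc μ {x} = μseq t {x} := by
          rw [← hμ t, Measure.restrict_apply (measurableSet_singleton x),
            inter_eq_left.mpr (singleton_subset_iff.mpr hxt)]
      _ ≤ (2 * ((s + 1 : ℕ) : ℝ≥0∞))⁻¹ := μseq_singleton_le hst (lt_abs_of_notMem_I hx)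
      _ ≤ 1 / (2 * s) := by rw [one_div]; gcongr; omega
  refine ⟨hsmall, ENNReal.tendsto_nhds_zero.mpr fun ε hε => ?_⟩
  obtain ⟨n, hn⟩ := ENNReal.exists_inv_nat_lt hε.ne'
  have hI : I (n + 1) ⊆ Icc ((1 - 3 ^ (n + 1)) / 2 - 1 / 3) ((3 ^ (n + 1) - 1) / 2 + 1 / 3) :=
    Ioo_subset_Icc_self
  filter_upwards [isCompact_Icc.compl_mem_cocompact] with x hx
  calc μ {x} ≤ 1 / (2 * ((n + 1 : ℕ) : ℝ≥0∞)) := hsmall (n + 1) (by omega) x fun h => hx (hI h)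
    _ ≤ ε := by
        refine le_trans ?_ hn.le
        rw [one_div]
        gcongr
        exact_mod_cast (show n ≤ 2 * (n + 1) by omega)
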